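/- Let ρ₁, ρ₂, ρ₃ be density matrices of the same dimension d. Then the 3×3 real symmetric matrix E₃ with entries (E₃)ᵢⱼ = √(F(ρᵢ; ρⱼ)) (so with diagonal entries 1) is positive semidefinite. -/

import Mathlib

open scoped Classical

open Matrix ComplexOrder

/-- The positive semidefinite square root of a matrix: the unique PSD square root
when the matrix is PSD, and `0` otherwise. -/
noncomputable def msqrt {n : Type*} [Fintype n] [DecidableEq n]
    (A : Matrix n n ℂ) : Matrix n n ℂ :=
  if h : A.PosSemidef then
    (h.1.eigenvectorUnitary : Matrix n n ℂ) *
      diagonal ((↑) ∘ (√·) ∘ h.1.eigenvalues) * (star h.1.eigenvectorUnitary : Matrix n n ℂ)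
  else 0

/-- Fidelity between two states: `F(ρ₁; ρ₂) = (tr √(√ρ₁ · ρ₂ · √ρ₁))²`. -/
noncomputable def fidelity {n : Type*} [Fintype n] [DecidableEq n]
    (ρ₁ ρ₂ : Matrix n n ℂ) : ℝ :=
  ((msqrt (msqrt ρ₁ * ρ₂ * msqrt ρ₁)).trace).re ^ 2

/-!
Write `√F(ρ, σ)` as the trace norm `‖√σ √ρ‖₁`. By the polar decomposition this is the largest
value of `|tr (V √σ √ρ)|` over unitaries `V`, and the maximum is attained. In the
Hilbert–Schmidt inner product `⟪A, B⟫ = tr (Aᴴ B)` every `√ρ V` is a unit vector, `√F(ρ, σ)` is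
`⟪√σ, √ρ V⟫` for a suitable `V`, and `|⟪√ρ V, √σ W⟫| ≤ √F(ρ, σ)` for all unitaries `V`, `W`. The
triangle inequality for angles between unit vectors therefore makes the Bures angle
`arccos √F` a pseudometric with values in `[0, π/2]`. The cosine matrix of three points of such a
space is positive semidefinite: its determinant factors as
`(cos β - cos (α + γ)) * (cos (α - γ) - cos β)`, and both factors are nonnegative by the triangle
inequalities.
-/

section Msqrt

open scoped MatrixOrder

variable {n : Type*} [Fintype n] [DecidableEq n]

theorem msqrt_eq_cfcSqrt {A : Matrix n n ℂ} (hA : A.PosSemidef) : msqrt A = CFC.sqrt A := by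
  rw [CFC.sqrt_eq_real_sqrt A hA.nonneg, cfcₙ_eq_cfc, hA.1.cfc_eq, msqrt, dif_pos hA]
  rfl

theorem posSemidef_msqrt (A : Matrix n n ℂ) : (msqrt A).PosSemidef := by
  by_cases hA : A.PosSemidef
  · rw [msqrt_eq_cfcSqrt hA, ← nonneg_iff_posSemidef]
    exact CFC.sqrt_nonneg A
  · rw [msqrt, dif_neg hA]
    exact PosSemidef.zero

theorem msqrt_mul_msqrt {A : Matrix n n ℂ} (hA : A.PosSemidef) : msqrt A * msqrt A = A := by
  rw [msqrt_eq_cfcSqrt hA]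
  exact CFC.sqrt_mul_sqrt_self A hA.nonneg

theorem msqrt_mul_self {A : Matrix n n ℂ} (hA : A.PosSemidef) : msqrt (A * A) = A := by
  have hAA : (A * A).PosSemidef := by
    simpa [hA.1.eq] using posSemidef_conjTranspose_mul_self A
  rw [msqrt_eq_cfcSqrt hAA, CFC.sqrt_mul_self A hA.nonneg]

end Msqrt

namespace Matrix

noncomputable def toHilbertSchmidt {𝕜 m n : Type*} [RCLike 𝕜] (A : Matrix m n 𝕜) :
    EuclideanSpace 𝕜 (m × n) :=
  WithLp.toLp 2 fun p => A p.1 p.2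

section HilbertSchmidt

variable {𝕜 m n : Type*} [RCLike 𝕜] [Fintype m] [Fintype n]

theorem inner_toHilbertSchmidt (A B : Matrix m n 𝕜) :
    inner 𝕜 A.toHilbertSchmidt B.toHilbertSchmidt = (Aᴴ * B).trace := by
  simp only [toHilbertSchmidt, PiLp.inner_apply, RCLike.inner_apply, Fintype.sum_prod_type,
    trace, diag_apply, mul_apply, conjTranspose_apply, RCLike.star_def]
  rw [Finset.sum_comm]
  simp [mul_comm]

theorem norm_toHilbertSchmidt (A : Matrix m n 𝕜) :
    ‖A.toHilbertSchmidt‖ = √(RCLike.re (Aᴴ * A).trace) := by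
  rw [norm_eq_sqrt_re_inner (𝕜 := 𝕜), inner_toHilbertSchmidt]

theorem norm_toHilbertSchmidt_unitary_mul [DecidableEq m] {U : Matrix m m 𝕜}
    (hU : U ∈ unitaryGroup m 𝕜) (A : Matrix m n 𝕜) :
    ‖(U * A).toHilbertSchmidt‖ = ‖A.toHilbertSchmidt‖ := by
  rw [norm_toHilbertSchmidt, norm_toHilbertSchmidt, conjTranspose_mul, Matrix.mul_assoc,
    ← Matrix.mul_assoc Uᴴ, ← star_eq_conjTranspose, mem_unitaryGroup_iff'.mp hU, Matrix.one_mul]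

theorem norm_toHilbertSchmidt_mul_unitary [DecidableEq n] (A : Matrix m n 𝕜) {U : Matrix n n 𝕜}
    (hU : U ∈ unitaryGroup n 𝕜) : ‖(A * U).toHilbertSchmidt‖ = ‖A.toHilbertSchmidt‖ := by
  rw [norm_toHilbertSchmidt, norm_toHilbertSchmidt, conjTranspose_mul, Matrix.mul_assoc,
    trace_mul_comm, ← Matrix.mul_assoc, Matrix.mul_assoc, ← star_eq_conjTranspose,
    mem_unitaryGroup_iff.mp hU, Matrix.mul_one]

end HilbertSchmidt

variable {n : Type*} [Fintype n] [DecidableEq n]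

theorem exists_unitary_mul_diagonal_of_conjTranspose_mul_self {𝕜 : Type*} [RCLike 𝕜]
    {Y : Matrix n n 𝕜} {d : n → ℝ} (h : Yᴴ * Y = diagonal fun i => (d i : 𝕜) ^ 2) :
    ∃ F ∈ unitaryGroup n 𝕜, Y = F * diagonal fun i => (d i : 𝕜) := by
  -- The columns of `Y` are orthogonal of lengths `|d i|`: normalise the nonzero ones and extend
  -- them to an orthonormal basis, whose vectors are the columns of `F`.
  let c : n → EuclideanSpace 𝕜 n := fun i => WithLp.toLp 2 fun k => Y k i
  have inner_c (i j : n) : inner 𝕜 (c i) (c j) = if i = j then (d i : 𝕜) ^ 2 else 0 := by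
    have := congrFun (congrFun h i) j
    simp only [mul_apply, conjTranspose_apply, diagonal_apply] at this
    rw [← this, EuclideanSpace.inner_eq_star_dotProduct]
    simp [c, dotProduct, mul_comm]
  let s : Set n := {i | d i ≠ 0}
  let v : n → EuclideanSpace 𝕜 n := fun i => (d i : 𝕜)⁻¹ • c i
  have hv : Orthonormal 𝕜 (s.domRestrict v) := by
    rw [orthonormal_iff_ite]
    rintro ⟨i, hi⟩ ⟨j, hj⟩
    change inner 𝕜 (v i) (v j) = _
    simp only [v, inner_smul_left, inner_smul_right, inner_c, Subtype.mk.injEq]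
    split_ifs with hij
    · subst hij
      have : (d i : 𝕜) ≠ 0 := by exact_mod_cast hi
      simp [this, sq]
    · simp
  obtain ⟨f, hf⟩ := hv.exists_orthonormalBasis_extension_of_card_eq finrank_euclideanSpace
  have hcol (i : n) : c i = (d i : 𝕜) • f i := by
    by_cases hi : d i = 0
    · simp [inner_self_eq_zero.mp (by rw [inner_c]; simp [hi] : inner 𝕜 (c i) (c i) = 0), hi]
    · have : (d i : 𝕜) ≠ 0 := by exact_mod_cast hi
      simp [hf i hi, v, smul_smul, this]
  refine ⟨(EuclideanSpace.basisFun n 𝕜).toBasis.toMatrix f.toBasis,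
    (EuclideanSpace.basisFun n 𝕜).toMatrix_orthonormalBasis_mem_unitary f, ?_⟩
  ext k i
  have := congrArg (fun x : EuclideanSpace 𝕜 n => x k) (hcol i)
  simp only [c, PiLp.smul_apply] at this
  simp [mul_diagonal, Module.Basis.toMatrix_apply, this, mul_comm]

theorem exists_unitary_eq_mul_msqrt (X : Matrix n n ℂ) :
    ∃ U ∈ unitaryGroup n ℂ, X = U * msqrt (Xᴴ * X) := by
  have hP := posSemidef_conjTranspose_mul_self X
  have hdiag := hP.1.conjStarAlgAut_star_eigenvectorUnitary
  rw [Unitary.conjStarAlgAut_star_apply] at hdiag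
  set E : Matrix n n ℂ := (hP.1.eigenvectorUnitary : Matrix n n ℂ)
  have hEE : star E * E = 1 := Unitary.coe_star_mul_self _
  have hEE' : E * star E = 1 := Unitary.coe_mul_star_self _
  set d : n → ℝ := fun i => √(hP.1.eigenvalues i)
  have hXE : (X * E)ᴴ * (X * E) = diagonal fun i => (d i : ℂ) ^ 2 := by
    rw [show (X * E)ᴴ * (X * E) = star E * (Xᴴ * X) * E by
      simp only [conjTranspose_mul, star_eq_conjTranspose, mul_assoc], hdiag]
    simp [d, ← Complex.ofReal_pow, Real.sq_sqrt (hP.eigenvalues_nonneg _), Function.comp_def]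
  obtain ⟨F, hF, hXEF⟩ := exists_unitary_mul_diagonal_of_conjTranspose_mul_self hXE
  refine ⟨F * star E, mul_mem hF (Unitary.star_mem (SetLike.coe_mem _)), ?_⟩
  calc X = X * E * star E := by rw [mul_assoc, hEE', mul_one]
    _ = F * star E * (E * diagonal (fun i => (d i : ℂ)) * star E) := by
      rw [hXEF]; simp only [mul_assoc, ← mul_assoc (star E) E, hEE, one_mul]; rfl
    _ = F * star E * msqrt (Xᴴ * X) := by rw [msqrt, dif_pos hP]; rfl

theorem norm_trace_unitary_mul_le {W P : Matrix n n ℂ} (hW : W ∈ unitaryGroup n ℂ)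
    (hP : P.PosSemidef) : ‖(W * P).trace‖ ≤ P.trace.re := by
  set S := msqrt P
  have hS : Sᴴ = S := (posSemidef_msqrt P).1
  have htr : (W * P).trace = inner ℂ S.toHilbertSchmidt (W * S).toHilbertSchmidt := by
    rw [inner_toHilbertSchmidt, hS, ← msqrt_mul_msqrt hP, ← mul_assoc, trace_mul_comm]
  calc ‖(W * P).trace‖ ≤ ‖S.toHilbertSchmidt‖ * ‖(W * S).toHilbertSchmidt‖ :=
        htr ▸ norm_inner_le_norm _ _
    _ = P.trace.re := by
      rw [norm_toHilbertSchmidt_unitary_mul hW, ← sq, norm_toHilbertSchmidt, hS,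
        msqrt_mul_msqrt hP, Real.sq_sqrt (RCLike.nonneg_iff.mp hP.trace_nonneg).1]
      rfl

noncomputable def traceNorm (X : Matrix n n ℂ) : ℝ :=
  (msqrt (Xᴴ * X)).trace.re

theorem traceNorm_nonneg (X : Matrix n n ℂ) : 0 ≤ traceNorm X :=
  (RCLike.nonneg_iff.mp (posSemidef_msqrt _).trace_nonneg).1

theorem norm_trace_unitary_mul_le_traceNorm {V : Matrix n n ℂ} (hV : V ∈ unitaryGroup n ℂ)
    (X : Matrix n n ℂ) : ‖(V * X).trace‖ ≤ traceNorm X := by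
  obtain ⟨U, hU, hX⟩ := exists_unitary_eq_mul_msqrt X
  conv_lhs => rw [hX, ← mul_assoc]
  exact norm_trace_unitary_mul_le (mul_mem hV hU) (posSemidef_msqrt _)

theorem exists_unitary_trace_mul_eq_traceNorm (X : Matrix n n ℂ) :
    ∃ V ∈ unitaryGroup n ℂ, (V * X).trace = traceNorm X := by
  obtain ⟨U, hU, hX⟩ := exists_unitary_eq_mul_msqrt X
  refine ⟨star U, Unitary.star_mem hU, ?_⟩
  conv_lhs => rw [hX, ← mul_assoc, mem_unitaryGroup_iff'.mp hU, one_mul]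
  exact Complex.eq_re_of_ofReal_le (r := 0) (by
    rw [Complex.ofReal_zero]; exact (posSemidef_msqrt _).trace_nonneg)

theorem traceNorm_conjTranspose (X : Matrix n n ℂ) : traceNorm Xᴴ = traceNorm X := by
  obtain ⟨U, hU, hX⟩ := exists_unitary_eq_mul_msqrt X
  set P := msqrt (Xᴴ * X)
  have hP : P.PosSemidef := posSemidef_msqrt _
  have hUPU : (U * P * Uᴴ) * (U * P * Uᴴ) = Xᴴᴴ * Xᴴ := by
    rw [conjTranspose_conjTranspose, hX, conjTranspose_mul, hP.1.eq]
    simp only [← star_eq_conjTranspose, mul_assoc]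
    rw [← mul_assoc (star U) U, mem_unitaryGroup_iff'.mp hU, one_mul]
  rw [traceNorm, ← hUPU, msqrt_mul_self (hP.mul_mul_conjTranspose_same U), mul_assoc,
    trace_mul_comm, mul_assoc, ← star_eq_conjTranspose, mem_unitaryGroup_iff'.mp hU, mul_one]
  rfl

end Matrix

theorem arccos_re_inner_le_add {𝕜 E : Type*} [RCLike 𝕜] [NormedAddCommGroup E]
    [InnerProductSpace 𝕜 E] {u v w : E} (hu : ‖u‖ = 1) (hv : ‖v‖ = 1) (hw : ‖w‖ = 1) :
    Real.arccos (RCLike.re (inner 𝕜 u w)) ≤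
      Real.arccos (RCLike.re (inner 𝕜 u v)) + Real.arccos (RCLike.re (inner 𝕜 v w)) := by
  let := InnerProductSpace.rclikeToReal 𝕜 E
  simpa [InnerProductGeometry.angle, hu, hv, hw, real_inner_eq_re_inner] using
    InnerProductGeometry.angle_le_angle_add_angle u v w

section Fidelity

variable {n : Type*} [Fintype n] [DecidableEq n]

theorem msqrt_mul_mul_msqrt_eq (ρ : Matrix n n ℂ) {σ : Matrix n n ℂ} (hσ : σ.PosSemidef) :
    msqrt ρ * σ * msqrt ρ = (msqrt σ * msqrt ρ)ᴴ * (msqrt σ * msqrt ρ) := by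
  rw [conjTranspose_mul, (posSemidef_msqrt ρ).1.eq, (posSemidef_msqrt σ).1.eq]
  conv_lhs => rw [← msqrt_mul_msqrt hσ]
  simp only [mul_assoc]

theorem sqrt_fidelity_eq_traceNorm (ρ : Matrix n n ℂ) {σ : Matrix n n ℂ} (hσ : σ.PosSemidef) :
    √(fidelity ρ σ) = traceNorm (msqrt σ * msqrt ρ) := by
  rw [fidelity, msqrt_mul_mul_msqrt_eq ρ hσ]
  exact Real.sqrt_sq (traceNorm_nonneg _)

theorem sqrt_fidelity_comm {ρ σ : Matrix n n ℂ} (hρ : ρ.PosSemidef) (hσ : σ.PosSemidef) :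
    √(fidelity ρ σ) = √(fidelity σ ρ) := by
  rw [sqrt_fidelity_eq_traceNorm ρ hσ, sqrt_fidelity_eq_traceNorm σ hρ, ← traceNorm_conjTranspose,
    conjTranspose_mul, (posSemidef_msqrt ρ).1.eq, (posSemidef_msqrt σ).1.eq]

theorem sqrt_fidelity_self {ρ : Matrix n n ℂ} (hρ : ρ.PosSemidef) (hρ₁ : ρ.trace = 1) :
    √(fidelity ρ ρ) = 1 := by
  rw [sqrt_fidelity_eq_traceNorm ρ hρ, msqrt_mul_msqrt hρ, traceNorm, hρ.1.eq, msqrt_mul_self hρ,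
    hρ₁, Complex.one_re]

theorem norm_toHilbertSchmidt_msqrt {ρ : Matrix n n ℂ} (hρ : ρ.PosSemidef) (hρ₁ : ρ.trace = 1) :
    ‖(msqrt ρ).toHilbertSchmidt‖ = 1 := by
  rw [norm_toHilbertSchmidt, (posSemidef_msqrt ρ).1.eq, msqrt_mul_msqrt hρ, hρ₁]
  simp

theorem exists_unitary_inner_toHilbertSchmidt_eq_sqrt_fidelity (ρ : Matrix n n ℂ)
    {σ : Matrix n n ℂ} (hσ : σ.PosSemidef) :
    ∃ V ∈ unitaryGroup n ℂ,
      inner ℂ (msqrt σ).toHilbertSchmidt (msqrt ρ * V).toHilbertSchmidt = √(fidelity ρ σ) := by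
  obtain ⟨V, hV, htr⟩ := exists_unitary_trace_mul_eq_traceNorm (msqrt σ * msqrt ρ)
  refine ⟨V, hV, ?_⟩
  rw [inner_toHilbertSchmidt, (posSemidef_msqrt σ).1.eq, ← mul_assoc, trace_mul_comm, htr,
    sqrt_fidelity_eq_traceNorm ρ hσ]

theorem norm_inner_toHilbertSchmidt_le_sqrt_fidelity {ρ : Matrix n n ℂ} (hρ : ρ.PosSemidef)
    (σ : Matrix n n ℂ) {V W : Matrix n n ℂ} (hV : V ∈ unitaryGroup n ℂ)
    (hW : W ∈ unitaryGroup n ℂ) :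
    ‖inner ℂ (msqrt ρ * V).toHilbertSchmidt (msqrt σ * W).toHilbertSchmidt‖ ≤
      √(fidelity σ ρ) := by
  have htr : ((msqrt ρ * V)ᴴ * (msqrt σ * W)).trace =
      (W * star V * (msqrt ρ * msqrt σ)).trace :=
    calc ((msqrt ρ * V)ᴴ * (msqrt σ * W)).trace = (star V * msqrt ρ * msqrt σ * W).trace := by
          rw [conjTranspose_mul, (posSemidef_msqrt ρ).1.eq, star_eq_conjTranspose]
          simp only [mul_assoc]
      _ = (W * (star V * msqrt ρ * msqrt σ)).trace := trace_mul_comm _ _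
      _ = (W * star V * (msqrt ρ * msqrt σ)).trace := by simp only [mul_assoc]
  rw [inner_toHilbertSchmidt, htr, sqrt_fidelity_eq_traceNorm σ hρ]
  exact norm_trace_unitary_mul_le_traceNorm (mul_mem hW (Unitary.star_mem hV)) _

theorem sqrt_fidelity_le_one {ρ σ : Matrix n n ℂ} (hρ : ρ.PosSemidef) (hρ₁ : ρ.trace = 1)
    (hσ : σ.PosSemidef) (hσ₁ : σ.trace = 1) : √(fidelity ρ σ) ≤ 1 := by
  obtain ⟨V, hV, h⟩ := exists_unitary_inner_toHilbertSchmidt_eq_sqrt_fidelity ρ hσ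
  have : (inner ℂ (msqrt σ).toHilbertSchmidt (msqrt ρ * V).toHilbertSchmidt).re ≤
      ‖(msqrt σ).toHilbertSchmidt‖ * ‖(msqrt ρ * V).toHilbertSchmidt‖ :=
    re_inner_le_norm (𝕜 := ℂ) _ _
  rwa [h, Complex.ofReal_re, norm_toHilbertSchmidt_mul_unitary _ hV,
    norm_toHilbertSchmidt_msqrt hσ hσ₁, norm_toHilbertSchmidt_msqrt hρ hρ₁, one_mul] at this

noncomputable def buresAngle (ρ σ : Matrix n n ℂ) : ℝ :=
  Real.arccos √(fidelity ρ σ)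

theorem cos_buresAngle {ρ σ : Matrix n n ℂ} (hρ : ρ.PosSemidef) (hρ₁ : ρ.trace = 1)
    (hσ : σ.PosSemidef) (hσ₁ : σ.trace = 1) : Real.cos (buresAngle ρ σ) = √(fidelity ρ σ) :=
  Real.cos_arccos (by linarith [Real.sqrt_nonneg (fidelity ρ σ)])
    (sqrt_fidelity_le_one hρ hρ₁ hσ hσ₁)

theorem buresAngle_comm {ρ σ : Matrix n n ℂ} (hρ : ρ.PosSemidef) (hσ : σ.PosSemidef) :
    buresAngle ρ σ = buresAngle σ ρ := by
  rw [buresAngle, buresAngle, sqrt_fidelity_comm hρ hσ]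

theorem buresAngle_self {ρ : Matrix n n ℂ} (hρ : ρ.PosSemidef) (hρ₁ : ρ.trace = 1) :
    buresAngle ρ ρ = 0 := by
  rw [buresAngle, sqrt_fidelity_self hρ hρ₁, Real.arccos_one]

theorem buresAngle_le_pi_div_two (ρ σ : Matrix n n ℂ) : buresAngle ρ σ ≤ Real.pi / 2 :=
  Real.arccos_le_pi_div_two.mpr (Real.sqrt_nonneg _)

theorem buresAngle_le_add {ρ₁ ρ₂ ρ₃ : Matrix n n ℂ} (hρ₁ : ρ₁.PosSemidef) (hρ₁₁ : ρ₁.trace = 1)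
    (hρ₂ : ρ₂.PosSemidef) (hρ₂₁ : ρ₂.trace = 1) (hρ₃ : ρ₃.PosSemidef) (hρ₃₁ : ρ₃.trace = 1) :
    buresAngle ρ₁ ρ₃ ≤ buresAngle ρ₁ ρ₂ + buresAngle ρ₂ ρ₃ := by
  obtain ⟨V₁, hV₁, h₂₁⟩ := exists_unitary_inner_toHilbertSchmidt_eq_sqrt_fidelity ρ₁ hρ₂
  obtain ⟨V₃, hV₃, h₂₃⟩ := exists_unitary_inner_toHilbertSchmidt_eq_sqrt_fidelity ρ₃ hρ₂
  have hu : ‖(msqrt ρ₁ * V₁).toHilbertSchmidt‖ = 1 := by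
    rw [norm_toHilbertSchmidt_mul_unitary _ hV₁, norm_toHilbertSchmidt_msqrt hρ₁ hρ₁₁]
  have hw : ‖(msqrt ρ₃ * V₃).toHilbertSchmidt‖ = 1 := by
    rw [norm_toHilbertSchmidt_mul_unitary _ hV₃, norm_toHilbertSchmidt_msqrt hρ₃ hρ₃₁]
  have re₁₂ : (inner ℂ (msqrt ρ₁ * V₁).toHilbertSchmidt (msqrt ρ₂).toHilbertSchmidt).re =
      √(fidelity ρ₁ ρ₂) := by
    rw [← inner_conj_symm, h₂₁, Complex.conj_re, Complex.ofReal_re]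
  have re₂₃ : (inner ℂ (msqrt ρ₂).toHilbertSchmidt (msqrt ρ₃ * V₃).toHilbertSchmidt).re =
      √(fidelity ρ₂ ρ₃) := by
    rw [h₂₃, Complex.ofReal_re, sqrt_fidelity_comm hρ₃ hρ₂]
  have re₁₃ : (inner ℂ (msqrt ρ₁ * V₁).toHilbertSchmidt (msqrt ρ₃ * V₃).toHilbertSchmidt).re ≤
      √(fidelity ρ₁ ρ₃) := by
    rw [sqrt_fidelity_comm hρ₁ hρ₃]
    exact (Complex.re_le_norm _).trans
      (norm_inner_toHilbertSchmidt_le_sqrt_fidelity hρ₁ ρ₃ hV₁ hV₃)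
  have := arccos_re_inner_le_add (𝕜 := ℂ) hu (norm_toHilbertSchmidt_msqrt hρ₂ hρ₂₁) hw
  rw [RCLike.re_to_complex, RCLike.re_to_complex, RCLike.re_to_complex, re₁₂, re₂₃] at this
  exact (Real.arccos_le_arccos re₁₃).trans this

end Fidelity

section CosineMatrix

open Real

theorem one_add_two_mul_cos_sub_cos_sq_nonneg {α β γ : ℝ} (hβ : β ≤ α + γ) (hα : α ≤ β + γ)
    (hγ : γ ≤ α + β) (hper : α + β + γ ≤ 2 * π) :
    0 ≤ 1 + 2 * cos α * cos β * cos γ - cos α ^ 2 - cos β ^ 2 - cos γ ^ 2 := by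
  have hβ₀ : 0 ≤ β := by linarith
  have hβπ : β ≤ π := by linarith
  have h₁ : cos (α + γ) ≤ cos β := by
    rcases le_total (α + γ) π with h | h
    · exact cos_le_cos_of_nonneg_of_le_pi hβ₀ h hβ
    · rw [← cos_two_pi_sub]
      exact cos_le_cos_of_nonneg_of_le_pi hβ₀ (by linarith) (by linarith)
  have h₂ : cos β ≤ cos (α - γ) := by
    rw [← cos_abs (α - γ)]
    exact cos_le_cos_of_nonneg_of_le_pi (abs_nonneg _) hβπ
      (abs_sub_le_iff.mpr ⟨by linarith, by linarith⟩)
  have factor : 1 + 2 * cos α * cos β * cos γ - cos α ^ 2 - cos β ^ 2 - cos γ ^ 2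
      = (cos β - cos (α + γ)) * (cos (α - γ) - cos β) := by
    rw [cos_add, cos_sub]
    linear_combination (-sin α ^ 2) * sin_sq_add_cos_sq γ - (1 - cos γ ^ 2) * sin_sq_add_cos_sq α
  rw [factor]
  exact mul_nonneg (by linarith) (by linarith)

theorem quadratic_form_nonneg {p q r : ℝ} (hp : 0 ≤ p) (hr : 0 ≤ r) (hdisc : q ^ 2 ≤ p * r)
    (y z : ℝ) : 0 ≤ p * y ^ 2 + 2 * q * y * z + r * z ^ 2 := by
  rcases hp.eq_or_lt with rfl | hp
  · obtain rfl : q = 0 := by nlinarith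
    simpa using mul_nonneg hr (sq_nonneg z)
  · refine nonneg_of_mul_nonneg_right ?_ hp
    nlinarith [sq_nonneg (p * y + q * z), mul_nonneg (sub_nonneg.2 hdisc) (sq_nonneg z)]

theorem posSemidef_fin_three_of_det_nonneg {a b c : ℝ} (ha : a ^ 2 ≤ 1) (hb : b ^ 2 ≤ 1)
    (hdet : 0 ≤ 1 + 2 * a * b * c - a ^ 2 - b ^ 2 - c ^ 2) :
    (!![1, a, b; a, 1, c; b, c, 1]).PosSemidef := by
  refine posSemidef_iff_dotProduct_mulVec.mpr ⟨?_, fun x => ?_⟩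
  · ext i j; fin_cases i <;> fin_cases j <;> rfl
  · have := quadratic_form_nonneg (sub_nonneg.2 ha) (sub_nonneg.2 hb)
      (by nlinarith : (c - a * b) ^ 2 ≤ (1 - a ^ 2) * (1 - b ^ 2)) (x 1) (x 2)
    simp only [dotProduct, Pi.star_apply, star_trivial, mulVec, of_apply, cons_val',
      cons_val_fin_one, Fin.sum_univ_three, cons_val_zero, cons_val_one, cons_val, one_mul]
    nlinarith [sq_nonneg (x 0 + a * x 1 + b * x 2)]

theorem posSemidef_cos_of_triangle (θ : Fin 3 → Fin 3 → ℝ) (hθ : ∀ i, θ i i = 0)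
    (hsymm : ∀ i j, θ i j = θ j i) (htri : ∀ i j k, θ i k ≤ θ i j + θ j k)
    (hper : θ 0 1 + θ 0 2 + θ 1 2 ≤ 2 * π) :
    (Matrix.of fun i j => cos (θ i j)).PosSemidef := by
  have hmat : (Matrix.of fun i j => cos (θ i j)) =
      !![1, cos (θ 0 1), cos (θ 0 2); cos (θ 0 1), 1, cos (θ 1 2);
        cos (θ 0 2), cos (θ 1 2), 1] := by
    ext i j
    fin_cases i <;> fin_cases j <;> simp [hθ, hsymm 1 0, hsymm 2 0, hsymm 2 1]
  rw [hmat]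
  refine posSemidef_fin_three_of_det_nonneg (cos_sq_le_one _) (cos_sq_le_one _)
    (one_add_two_mul_cos_sub_cos_sq_nonneg (htri 0 1 2) ?_ ?_ hper)
  · linarith [htri 0 2 1, hsymm 2 1]
  · linarith [htri 1 0 2, hsymm 1 0]

end CosineMatrix

/-- For any three density matrices, the 3×3 matrix of root fidelities
`(E₃)ᵢⱼ = √F(ρᵢ; ρⱼ)` is positive semidefinite. -/
theorem rootFidelity_matrix_three_posSemidef {d : ℕ}
    (ρ : Fin 3 → Matrix (Fin d) (Fin d) ℂ)
    (hpsd : ∀ i, (ρ i).PosSemidef) (htr : ∀ i, (ρ i).trace = 1) :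
    (Matrix.of fun i j : Fin 3 =>
      Real.sqrt (fidelity (ρ i) (ρ j))).PosSemidef := by
  have hcos : (fun i j => √(fidelity (ρ i) (ρ j))) =
      fun i j => Real.cos (buresAngle (ρ i) (ρ j)) := by
    ext i j
    rw [cos_buresAngle (hpsd i) (htr i) (hpsd j) (htr j)]
  rw [hcos]
  refine posSemidef_cos_of_triangle _ (fun i => buresAngle_self (hpsd i) (htr i))
    (fun i j => buresAngle_comm (hpsd i) (hpsd j))
    (fun i j k => buresAngle_le_add (hpsd i) (htr i) (hpsd j) (htr j) (hpsd k) (htr k)) ?_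
  linarith [buresAngle_le_pi_div_two (ρ 0) (ρ 1), buresAngle_le_pi_div_two (ρ 0) (ρ 2),
    buresAngle_le_pi_div_two (ρ 1) (ρ 2), Real.pi_pos]
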